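/- arXiv:2110.02445 — 2 statements merged into one kernel-verified Lean document; each statement's English description precedes it below -/
import Mathlib

section
/- Let w(x₁,x₂,x₃) = A·x + B with A a constant skew-symmetric 3×3 matrix and B a constant vector. If w is periodic in x₃ (w(x_h, z) = w(x_h, z+L) for some L > 0), the third component of w has zero integral over the unit disc at each height, and the radial component of w vanishes on the cylinder {x₁²+x₂² = 1}, then w(x) = a·(−x₂, x₁, 0) for some constant a ∈ ℝ. -/
open Matrix MeasureTheory

theorem stmt3 (A : Matrix (Fin 3) (Fin 3) ℝ) (B : Fin 3 → ℝ) (L : ℝ) (hL : 0 < L)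
    (hskew : Aᵀ = -A)
    (w : (Fin 3 → ℝ) → (Fin 3 → ℝ))
    (hw : ∀ x, w x = A.mulVec x + B)
    (hper : ∀ x : Fin 3 → ℝ, w (fun i => if i = 2 then x i + L else x i) = w x)
    (hflux : ∀ z : ℝ,
      ∫ p in {q : ℝ × ℝ | q.1 ^ 2 + q.2 ^ 2 < 1}, w ![p.1, p.2, z] 2 = 0)
    (hbc : ∀ x : Fin 3 → ℝ, x 0 ^ 2 + x 1 ^ 2 = 1 →
      w x 0 * x 0 + w x 1 * x 1 = 0) :
    ∃ a : ℝ, ∀ x : Fin 3 → ℝ,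
      w x 0 = -a * x 1 ∧ w x 1 = a * x 0 ∧ w x 2 = 0 := by
  have hsk : ∀ i j, A j i = -A i j := by
    intro i j
    have := congrFun (congrFun hskew i) j
    simpa [Matrix.transpose_apply] using this
  have hdiag : ∀ i, A i i = 0 := by
    intro i; have := hsk i i; linarith
  -- periodicity kills the third column
  have hcol : ∀ i, A i 2 = 0 := by
    intro i
    have h := hper 0
    rw [hw, hw] at h
    have h2 := congrFun h i
    simp only [Pi.add_apply, Matrix.mulVec, dotProduct, Fin.sum_univ_three,
      Pi.zero_apply, add_zero, zero_add] at h2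
    have : A i 2 * L = 0 := by
      simpa using h2
    rcases mul_eq_zero.mp this with h | h
    · exact h
    · exact absurd h (ne_of_gt hL)
  have hA20 : A 2 0 = 0 := by rw [hsk 0 2, hcol 0, neg_zero]
  have hA21 : A 2 1 = 0 := by rw [hsk 1 2, hcol 1, neg_zero]
  -- flux kills B 2
  have hB2 : B 2 = 0 := by
    have h := hflux 0
    have heq : ∀ p : ℝ × ℝ, p ∈ {q : ℝ × ℝ | q.1 ^ 2 + q.2 ^ 2 < 1} →
        w ![p.1, p.2, (0:ℝ)] 2 = B 2 := by
      intro p _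
      rw [hw]
      simp [Matrix.mulVec, dotProduct, Fin.sum_univ_three, hA20, hA21, hdiag 2]
    have hmeas : MeasurableSet {q : ℝ × ℝ | q.1 ^ 2 + q.2 ^ 2 < 1} :=
      measurableSet_lt ((measurable_fst.pow_const 2).add (measurable_snd.pow_const 2))
        measurable_const
    rw [setIntegral_congr_fun hmeas heq] at h
    rw [setIntegral_const] at h
    have hopen : IsOpen {q : ℝ × ℝ | q.1 ^ 2 + q.2 ^ 2 < 1} := by
      exact isOpen_lt ((continuous_fst.pow 2).add (continuous_snd.pow 2)) continuous_const
    have hpos : 0 < volume {q : ℝ × ℝ | q.1 ^ 2 + q.2 ^ 2 < 1} :=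
      hopen.measure_pos volume ⟨(0, 0), by norm_num⟩
    have hsub : {q : ℝ × ℝ | q.1 ^ 2 + q.2 ^ 2 < 1} ⊆ Metric.closedBall 0 1 := by
      intro q hq
      simp only [Set.mem_setOf_eq] at hq
      have h1 : |q.1| ≤ 1 := by nlinarith [abs_nonneg q.1, sq_abs q.1, abs_nonneg q.2, sq_abs q.2]
      have h2 : |q.2| ≤ 1 := by nlinarith [abs_nonneg q.1, sq_abs q.1, abs_nonneg q.2, sq_abs q.2]
      rw [Metric.mem_closedBall, dist_zero_right, Prod.norm_def]
      simp [Real.norm_eq_abs, h1, h2]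
    have hfin : volume {q : ℝ × ℝ | q.1 ^ 2 + q.2 ^ 2 < 1} < ⊤ :=
      lt_of_le_of_lt (measure_mono hsub) measure_closedBall_lt_top
    have htr : 0 < (volume {q : ℝ × ℝ | q.1 ^ 2 + q.2 ^ 2 < 1}).toReal :=
      ENNReal.toReal_pos (ne_of_gt hpos) (ne_of_lt hfin)
    have := h
    rw [smul_eq_mul] at this
    rcases mul_eq_zero.mp this with h' | h'
    · exact absurd h' (ne_of_gt htr)
    · exact h'
  -- boundary condition kills B 0, B 1
  have hB0 : B 0 = 0 := by
    have h := hbc ![1, 0, 0] (by norm_num)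
    rw [hw] at h
    simpa [Matrix.mulVec, dotProduct, Fin.sum_univ_three, hdiag 0] using h
  have hB1 : B 1 = 0 := by
    have h := hbc ![0, 1, 0] (by norm_num)
    rw [hw] at h
    simpa [Matrix.mulVec, dotProduct, Fin.sum_univ_three, hdiag 1] using h
  refine ⟨A 1 0, fun x => ?_⟩
  have hA01 : A 0 1 = -A 1 0 := hsk 1 0
  rw [hw]
  refine ⟨?_, ?_, ?_⟩
  · simp [Matrix.mulVec, dotProduct, Fin.sum_univ_three, hdiag 0, hcol 0, hA01, hB0]
  · simp [Matrix.mulVec, dotProduct, Fin.sum_univ_three, hdiag 1, hcol 1, hB1]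
  · simp [Matrix.mulVec, dotProduct, Fin.sum_univ_three, hdiag 2, hA20, hA21, hB2]
end

section
/- Let v be a smooth vector field on ℝ³ and n = (x₁,x₂,0) on the cylinder {x₁²+x₂²=1}. Writing v in cylindrical components v = v_r e_r + v_θ e_θ + v_z e_z, the conditions (𝕊v·n)_τ = 0 and v·n = 0 on the cylinder are equivalent to: ∂_r v_θ − v_θ/r = 0, ∂_r v_z = 0, and v_r = 0 on r = 1. -/
noncomputable def cylPt (v : (Fin 3 → ℝ) → (Fin 3 → ℝ)) (r θ z : ℝ) : Fin 3 → ℝ :=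
  v ![r * Real.cos θ, r * Real.sin θ, z]
noncomputable def compR (v : (Fin 3 → ℝ) → (Fin 3 → ℝ)) (r θ z : ℝ) : ℝ :=
  cylPt v r θ z 0 * Real.cos θ + cylPt v r θ z 1 * Real.sin θ
noncomputable def compθ (v : (Fin 3 → ℝ) → (Fin 3 → ℝ)) (r θ z : ℝ) : ℝ :=
  -cylPt v r θ z 0 * Real.sin θ + cylPt v r θ z 1 * Real.cos θ
noncomputable def compZ (v : (Fin 3 → ℝ) → (Fin 3 → ℝ)) (r θ z : ℝ) : ℝ :=
  cylPt v r θ z 2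

lemma fderiv_expand (f : (Fin 3 → ℝ) → ℝ) (x u : Fin 3 → ℝ) :
    fderiv ℝ f x u = u 0 * fderiv ℝ f x (Pi.single 0 1) + u 1 * fderiv ℝ f x (Pi.single 1 1)
      + u 2 * fderiv ℝ f x (Pi.single 2 1) := by
  have hu : u = u 0 • (Pi.single 0 1 : Fin 3 → ℝ) + u 1 • (Pi.single 1 1 : Fin 3 → ℝ)
      + u 2 • (Pi.single 2 1 : Fin 3 → ℝ) := by
    funext i; fin_cases i <;> simp [Pi.single_apply]
  conv_lhs => rw [hu]
  simp [smul_eq_mul]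

lemma derivs (v : (Fin 3 → ℝ) → (Fin 3 → ℝ)) (hv : ContDiff ℝ (⊤ : ℕ∞) v) (θ z : ℝ) :
    deriv (fun r => compθ v r θ z) 1 =
      -(fderiv ℝ (fun y => v y 0) ![Real.cos θ, Real.sin θ, z] ![Real.cos θ, Real.sin θ, 0]) * Real.sin θ
      + (fderiv ℝ (fun y => v y 1) ![Real.cos θ, Real.sin θ, z] ![Real.cos θ, Real.sin θ, 0]) * Real.cos θ
    ∧ deriv (fun r => compZ v r θ z) 1 =
      fderiv ℝ (fun y => v y 2) ![Real.cos θ, Real.sin θ, z] ![Real.cos θ, Real.sin θ, 0]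
    ∧ deriv (fun t => compR v 1 t z) θ =
      (fderiv ℝ (fun y => v y 0) ![Real.cos θ, Real.sin θ, z] ![-Real.sin θ, Real.cos θ, 0]) * Real.cos θ
      + v ![Real.cos θ, Real.sin θ, z] 0 * (-Real.sin θ)
      + ((fderiv ℝ (fun y => v y 1) ![Real.cos θ, Real.sin θ, z] ![-Real.sin θ, Real.cos θ, 0]) * Real.sin θ
      + v ![Real.cos θ, Real.sin θ, z] 1 * Real.cos θ)
    ∧ deriv (fun t => compR v 1 θ t) z =
      (fderiv ℝ (fun y => v y 0) ![Real.cos θ, Real.sin θ, z] ![0, 0, 1]) * Real.cos θ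
      + (fderiv ℝ (fun y => v y 1) ![Real.cos θ, Real.sin θ, z] ![0, 0, 1]) * Real.sin θ := by
  have hd : ∀ j : Fin 3, Differentiable ℝ (fun y => v y j) :=
    fun j => differentiable_pi.mp (hv.differentiable (by simp)) j
  have key : ∀ (j : Fin 3) (γ : ℝ → Fin 3 → ℝ) (u : Fin 3 → ℝ) (t : ℝ), HasDerivAt γ u t →
      HasDerivAt (fun r => v (γ r) j) (fderiv ℝ (fun y => v y j) (γ t) u) t :=
    fun j γ u t hγ => ((hd j (γ t)).hasFDerivAt).comp_hasDerivAt t hγ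
  have hx1 : ![(1:ℝ) * Real.cos θ, 1 * Real.sin θ, z] = ![Real.cos θ, Real.sin θ, z] := by
    norm_num
  have hγr : HasDerivAt (fun r : ℝ => ![r * Real.cos θ, r * Real.sin θ, z])
      ![Real.cos θ, Real.sin θ, 0] 1 := by
    rw [hasDerivAt_pi]
    intro i; fin_cases i
    · simpa using (hasDerivAt_id (1:ℝ)).mul_const (Real.cos θ)
    · simpa using (hasDerivAt_id (1:ℝ)).mul_const (Real.sin θ)
    · simpa using hasDerivAt_const (1:ℝ) z
  have hr : ∀ j : Fin 3, HasDerivAt (fun r => v ![r * Real.cos θ, r * Real.sin θ, z] j)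
      (fderiv ℝ (fun y => v y j) ![Real.cos θ, Real.sin θ, z] ![Real.cos θ, Real.sin θ, 0]) 1 := by
    intro j
    have := key j _ _ 1 hγr
    rwa [hx1] at this
  have hγθ : HasDerivAt (fun t : ℝ => ![(1:ℝ) * Real.cos t, 1 * Real.sin t, z])
      ![-Real.sin θ, Real.cos θ, 0] θ := by
    rw [hasDerivAt_pi]
    intro i; fin_cases i
    · simpa using (Real.hasDerivAt_cos θ).const_mul (1:ℝ)
    · simpa using (Real.hasDerivAt_sin θ).const_mul (1:ℝ)
    · simpa using hasDerivAt_const θ z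
  have hθc : ∀ j : Fin 3, HasDerivAt (fun t => v ![(1:ℝ) * Real.cos t, 1 * Real.sin t, z] j)
      (fderiv ℝ (fun y => v y j) ![Real.cos θ, Real.sin θ, z] ![-Real.sin θ, Real.cos θ, 0]) θ := by
    intro j
    have := key j _ _ θ hγθ
    rwa [hx1] at this
  have hγz : HasDerivAt (fun t : ℝ => ![(1:ℝ) * Real.cos θ, 1 * Real.sin θ, t])
      ![0, 0, 1] z := by
    rw [hasDerivAt_pi]
    intro i; fin_cases i
    · simpa using hasDerivAt_const z ((1:ℝ) * Real.cos θ)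
    · simpa using hasDerivAt_const z ((1:ℝ) * Real.sin θ)
    · simpa using hasDerivAt_id' z
  have hzc : ∀ j : Fin 3, HasDerivAt (fun t => v ![(1:ℝ) * Real.cos θ, 1 * Real.sin θ, t] j)
      (fderiv ℝ (fun y => v y j) ![Real.cos θ, Real.sin θ, z] ![0, 0, 1]) z := by
    intro j
    have := key j _ _ z hγz
    rwa [hx1] at this
  refine ⟨?_, ?_, ?_, ?_⟩
  · exact (((hr 0).neg.mul_const (Real.sin θ)).add ((hr 1).mul_const (Real.cos θ))).deriv
  · exact (hr 2).deriv
  · have := (((hθc 0).mul (Real.hasDerivAt_cos θ)).add ((hθc 1).mul (Real.hasDerivAt_sin θ))).deriv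
    rw [hx1] at this
    exact this
  · exact (((hzc 0).mul_const (Real.cos θ)).add ((hzc 1).mul_const (Real.sin θ))).deriv

theorem stmt16 (v : (Fin 3 → ℝ) → (Fin 3 → ℝ)) (hv : ContDiff ℝ (⊤ : ℕ∞) v) :
    (∀ θ z : ℝ,
      let x : Fin 3 → ℝ := ![Real.cos θ, Real.sin θ, z]
      let n : Fin 3 → ℝ := ![Real.cos θ, Real.sin θ, 0]
      let S : Fin 3 → Fin 3 → ℝ := fun i j =>
        (fderiv ℝ (fun y => v y j) x (Pi.single i 1)
          + fderiv ℝ (fun y => v y i) x (Pi.single j 1)) / 2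
      let Sn : Fin 3 → ℝ := fun i => ∑ j : Fin 3, S i j * n j
      (∀ i : Fin 3, Sn i - (∑ k : Fin 3, Sn k * n k) * n i = 0) ∧
      (∑ i : Fin 3, v x i * n i = 0))
    ↔
    (∀ θ z : ℝ,
      deriv (fun r => compθ v r θ z) 1 - compθ v 1 θ z = 0 ∧
      deriv (fun r => compZ v r θ z) 1 = 0 ∧
      compR v 1 θ z = 0) := by
  constructor
  · intro h θ z
    have hR : ∀ a b : ℝ, compR v 1 a b = 0 := by
      intro a b
      have h2 := (h a b).2
      simpa [compR, cylPt, Fin.sum_univ_three] using h2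
    obtain ⟨hT, hN⟩ := h θ z
    have h0 := hT 0
    have h1 := hT 1
    have h2 := hT 2
    simp [Fin.sum_univ_three] at h0 h1 h2
    obtain ⟨E1, E2, E3, E4⟩ := derivs v hv θ z
    have hDθ : deriv (fun t => compR v 1 t z) θ = 0 := by
      have hc : (fun t => compR v 1 t z) = fun _ => 0 := funext fun t => hR t z
      rw [hc]; exact deriv_const θ 0
    have hDz : deriv (fun t => compR v 1 θ t) z = 0 := by
      have hc : (fun t => compR v 1 θ t) = fun _ => 0 := funext fun t => hR θ t
      rw [hc]; exact deriv_const z 0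
    rw [E3, fderiv_expand (fun y => v y 0) ![Real.cos θ, Real.sin θ, z] ![-Real.sin θ, Real.cos θ, 0],
      fderiv_expand (fun y => v y 1) ![Real.cos θ, Real.sin θ, z] ![-Real.sin θ, Real.cos θ, 0]] at hDθ
    rw [E4, fderiv_expand (fun y => v y 0) ![Real.cos θ, Real.sin θ, z] ![0, 0, 1],
      fderiv_expand (fun y => v y 1) ![Real.cos θ, Real.sin θ, z] ![0, 0, 1]] at hDz
    simp at hDθ hDz
    refine ⟨?_, ?_, hR θ z⟩
    · rw [E1, fderiv_expand (fun y => v y 0) ![Real.cos θ, Real.sin θ, z] ![Real.cos θ, Real.sin θ, 0],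
        fderiv_expand (fun y => v y 1) ![Real.cos θ, Real.sin θ, z] ![Real.cos θ, Real.sin θ, 0]]
      simp only [compθ, cylPt]
      simp
      linear_combination (-2 * Real.sin θ) * h0 + (2 * Real.cos θ) * h1 - hDθ
    · rw [E2, fderiv_expand (fun y => v y 2) ![Real.cos θ, Real.sin θ, z] ![Real.cos θ, Real.sin θ, 0]]
      simp
      linear_combination 2 * h2 - hDz
  · intro h θ z
    have hR : ∀ a b : ℝ, compR v 1 a b = 0 := fun a b => (h a b).2.2
    obtain ⟨hG1, hG2, _⟩ := h θ z
    obtain ⟨E1, E2, E3, E4⟩ := derivs v hv θ z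
    have hDθ : deriv (fun t => compR v 1 t z) θ = 0 := by
      have hc : (fun t => compR v 1 t z) = fun _ => 0 := funext fun t => hR t z
      rw [hc]; exact deriv_const θ 0
    have hDz : deriv (fun t => compR v 1 θ t) z = 0 := by
      have hc : (fun t => compR v 1 θ t) = fun _ => 0 := funext fun t => hR θ t
      rw [hc]; exact deriv_const z 0
    rw [E3, fderiv_expand (fun y => v y 0) ![Real.cos θ, Real.sin θ, z] ![-Real.sin θ, Real.cos θ, 0],
      fderiv_expand (fun y => v y 1) ![Real.cos θ, Real.sin θ, z] ![-Real.sin θ, Real.cos θ, 0]] at hDθ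
    rw [E4, fderiv_expand (fun y => v y 0) ![Real.cos θ, Real.sin θ, z] ![0, 0, 1],
      fderiv_expand (fun y => v y 1) ![Real.cos θ, Real.sin θ, z] ![0, 0, 1]] at hDz
    simp at hDθ hDz
    rw [E1, fderiv_expand (fun y => v y 0) ![Real.cos θ, Real.sin θ, z] ![Real.cos θ, Real.sin θ, 0],
      fderiv_expand (fun y => v y 1) ![Real.cos θ, Real.sin θ, z] ![Real.cos θ, Real.sin θ, 0]] at hG1
    rw [E2, fderiv_expand (fun y => v y 2) ![Real.cos θ, Real.sin θ, z] ![Real.cos θ, Real.sin θ, 0]] at hG2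
    simp only [compθ, cylPt] at hG1
    simp at hG1 hG2
    have pyth := Real.sin_sq_add_cos_sq θ
    constructor
    · intro i
      fin_cases i <;> simp [Fin.sum_univ_three]
      · linear_combination (-Real.sin θ / 2) * hG1 + (-Real.sin θ / 2) * hDθ
          - ((fderiv ℝ (fun y => v y 0) ![Real.cos θ, Real.sin θ, z]) (Pi.single 0 1) * Real.cos θ
            + ((fderiv ℝ (fun y => v y 1) ![Real.cos θ, Real.sin θ, z]) (Pi.single 0 1)
              + (fderiv ℝ (fun y => v y 0) ![Real.cos θ, Real.sin θ, z]) (Pi.single 1 1)) / 2 * Real.sin θ) * pyth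
      · linear_combination (Real.cos θ / 2) * hG1 + (Real.cos θ / 2) * hDθ
          - (((fderiv ℝ (fun y => v y 1) ![Real.cos θ, Real.sin θ, z]) (Pi.single 0 1)
              + (fderiv ℝ (fun y => v y 0) ![Real.cos θ, Real.sin θ, z]) (Pi.single 1 1)) / 2 * Real.cos θ
            + (fderiv ℝ (fun y => v y 1) ![Real.cos θ, Real.sin θ, z]) (Pi.single 1 1) * Real.sin θ) * pyth
      · linear_combination (1/2 : ℝ) * hG2 + (1/2 : ℝ) * hDz
    · have := hR θ z
      simpa [compR, cylPt, Fin.sum_univ_three] using this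
end
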